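/- Fix an integer k ≥ 1 and real numbers 0 ≤ r ≤ s. Let G = (V, E, W) be a finite weighted graph, let e₀ = (u, v) ∉ E be an additional edge with weight w₀ ≥ 0, and let G̃ = (V, E ∪ {e₀}, W̃) where W̃ agrees with W on E and W̃(e₀) = w₀. Then the persistent Betti numbers of the k-cluster filtrations of G and G̃ satisfy |β₀^{r,s}(G̃^(k)) − β₀^{r,s}(G^(k))| ≤ 1; that is, adding a single weighted edge changes the number of clusters born by time r and surviving past time s by at most one. -/

import Mathlib

open ENNReal

variable {V : Type*}

/-- The sublevel graph `G*_t`: edges of `G` with weight at most `t`. -/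
def sublevel (G : SimpleGraph V) (W : Sym2 V → NNReal) (t : ℝ≥0∞) : SimpleGraph V where
  Adj u v := G.Adj u v ∧ (W s(u, v) : ℝ≥0∞) ≤ t
  symm := by
    constructor
    intro u v h
    exact ⟨h.1.symm, by rw [Sym2.eq_swap]; exact h.2⟩
  loopless := ⟨fun v h => G.irrefl h.1⟩

/-- `N_t(v)`: the number of vertices in the connected component of `v` in `G*_t`. -/
noncomputable def clusterSize (G : SimpleGraph V) (W : Sym2 V → NNReal) (t : ℝ≥0∞) (v : V) : ℕ :=
  Set.ncard {u | (sublevel G W t).Reachable v u}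

/-- `τ_k(v) = inf {t : N_t(v) ≥ k}`, the `k`-cluster filtration value of a vertex. -/
noncomputable def tauV (G : SimpleGraph V) (W : Sym2 V → NNReal) (k : ℕ) (v : V) : ℝ≥0∞ :=
  sInf {t : ℝ≥0∞ | k ≤ clusterSize G W t v}

/-- `τ_k(e) = max (τ_k(u), τ_k(v), W(e))`, the `k`-cluster filtration value of an edge. -/
noncomputable def tauEdge (G : SimpleGraph V) (W : Sym2 V → NNReal) (k : ℕ) : Sym2 V → ℝ≥0∞ :=
  Sym2.lift ⟨fun u v => max (max (tauV G W k u) (tauV G W k v)) (W s(u, v)),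
    by intro u v; simp only []; rw [max_comm (tauV G W k u), Sym2.eq_swap]⟩

/-- The `k`-cluster sublevel graph `G^(k)_t`: its vertices are those `v` with
`τ_k(v) ≤ t` and its edges are those `e` with `τ_k(e) ≤ t`. -/
def kClusterGraph (G : SimpleGraph V) (W : Sym2 V → NNReal) (k : ℕ) (t : ℝ≥0∞) :
    SimpleGraph {v : V // tauV G W k v ≤ t} where
  Adj u v := G.Adj u.1 v.1 ∧ tauEdge G W k s(u.1, v.1) ≤ t
  symm := by
    constructor
    intro u v h
    exact ⟨h.1.symm, by rw [Sym2.eq_swap]; exact h.2⟩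
  loopless := ⟨fun v h => G.irrefl h.1⟩

/-- The 0-th persistent Betti number `β₀^{r,s}(G^(k))`: the number of connected
components of `G^(k)_s` containing at least one vertex `v` with `τ_k(v) ≤ r`. -/
noncomputable def persistentBetti (G : SimpleGraph V) (W : Sym2 V → NNReal) (k : ℕ)
    (r s : ℝ≥0∞) : ℕ :=
  Set.ncard {c : (kClusterGraph G W k s).ConnectedComponent |
    ∃ v : {v : V // tauV G W k v ≤ s},
      (kClusterGraph G W k s).connectedComponentMk v = c ∧ tauV G W k v.1 ≤ r}

/-!
A vertex whose `k`-cluster value drops below `t` when `e₀ = (u, v)` is added can only have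
gained cluster mass through `e₀`, so at time `t` it is joined to `u` in the new sublevel graph.
Hence every component of the new `k`-cluster graph counted by `β₀^{r,s}` is either the image of
an old counted component or the component of `u`: `β̃ ≤ β + 1`. Conversely, an old vertex can
meet a new vertex only through `e₀`, so two distinct old components become connected only
if both contain `u` or `v`; the map on components is therefore injective away from the
component of `u`, and `β ≤ β̃ + 1`.
-/

open SimpleGraph

lemma Set.ncard_le_ncard_add_one_of_subset_union {α : Type*} [Finite α] {S T U : Set α}
    (hU : U.Subsingleton) (h : S ⊆ T ∪ U) : S.ncard ≤ T.ncard + 1 :=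
  calc S.ncard ≤ (T ∪ U).ncard := Set.ncard_le_ncard h
  _ ≤ T.ncard + U.ncard := Set.ncard_union_le T U
  _ ≤ T.ncard + 1 := by gcongr; exact Set.ncard_le_one_iff_subsingleton.mpr hU

namespace SimpleGraph

variable {α : Type*}

lemma Reachable.mem_of_adj_closed {H : SimpleGraph α} {S : Set α}
    (hS : ∀ ⦃x y⦄, x ∈ S → H.Adj x y → y ∈ S) {x y : α} (h : H.Reachable x y) (hx : x ∈ S) :
    y ∈ S := by
  obtain ⟨p⟩ := h
  induction p with
  | nil => exact hx
  | cons hadj _ ih => exact ih (hS hx hadj)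

lemma Reachable.of_le_sup_edge {A B : SimpleGraph α} {u v x y : α} (hB : B ≤ A ⊔ edge u v)
    (h : B.Reachable x y) : A.Reachable x y ∨ B.Reachable x u ∧ B.Reachable x v := by
  by_contra! hne
  refine hne.1 (h.mem_of_adj_closed (S := {z | A.Reachable x z ∧ B.Reachable x z}) ?_
    ⟨.rfl, .rfl⟩).1
  rintro z w ⟨hAz, hBz⟩ hzw
  have hBw := hBz.trans hzw.reachable
  rcases hB hzw with hA | hE
  · exact ⟨hAz.trans hA.reachable, hBw⟩
  · obtain ⟨⟨rfl, rfl⟩ | ⟨rfl, rfl⟩, -⟩ := (edge_adj _ _ _ _).mp hE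
    exacts [(hne.2 hBz hBw).elim, (hne.2 hBw hBz).elim]

lemma subsingleton_image_connectedComponentMk {p : α → Prop} (H : SimpleGraph {x // p x})
    (u : α) : (H.connectedComponentMk '' {z | z.1 = u}).Subsingleton :=
  Set.Subsingleton.image (fun _ h₁ _ h₂ => Subtype.ext (h₁.trans h₂.symm)) _

end SimpleGraph

section Filtration

variable {G : SimpleGraph V} {W : Sym2 V → NNReal} {k : ℕ} {t s : ℝ≥0∞} {x y : V}

lemma clusterSize_le_of_le [Finite V] {G' : SimpleGraph V} {W' : Sym2 V → NNReal} {t' : ℝ≥0∞}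
    (h : sublevel G W t ≤ sublevel G' W' t') (x : V) :
    clusterSize G W t x ≤ clusterSize G' W' t' x :=
  Set.ncard_le_ncard fun _ hy => hy.mono h

lemma clusterSize_eq_of_reachable (h : (sublevel G W t).Reachable x y) :
    clusterSize G W t x = clusterSize G W t y := by
  unfold clusterSize
  congr 1
  ext z
  exact ⟨h.symm.trans, h.trans⟩

lemma tauV_le_of_le_clusterSize (h : k ≤ clusterSize G W t x) : tauV G W k x ≤ t :=
  sInf_le h

/-- The infimum defining `τ_k` is attained: between `t` and the next edge weight above it the
sublevel graph does not change. -/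
lemma le_clusterSize_of_tauV_le [Finite V] (ht : t ≠ ⊤) (h : tauV G W k x ≤ t) :
    k ≤ clusterSize G W t x := by
  set A : Set ℝ≥0∞ := (fun e => (W e : ℝ≥0∞)) '' {e | t < W e}
  have htA : t < sInf A := by
    rcases A.eq_empty_or_nonempty with hA | hA
    · rw [hA, sInf_empty]
      exact ht.lt_top
    · obtain ⟨e, he, hAe⟩ := hA.csInf_mem (Set.toFinite A)
      exact hAe ▸ he
  obtain ⟨t', hk, ht'⟩ := sInf_lt_iff.mp (h.trans_lt htA)
  refine hk.trans (clusterSize_le_of_le (fun a b hab => ⟨hab.1, ?_⟩) x)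
  by_contra! hlt
  exact ((sInf_le (show _ ∈ A from ⟨_, hlt, rfl⟩)).trans hab.2).not_gt ht'

lemma tauV_le_of_reachable [Finite V] (ht : t ≠ ⊤) (hx : tauV G W k x ≤ t)
    (h : (sublevel G W t).Reachable x y) : tauV G W k y ≤ t :=
  tauV_le_of_le_clusterSize
    ((le_clusterSize_of_tauV_le ht hx).trans_eq (clusterSize_eq_of_reachable h))

@[simp]
lemma tauEdge_mk (a b : V) :
    tauEdge G W k s(a, b) = max (max (tauV G W k a) (tauV G W k b)) (W s(a, b)) :=
  rfl

lemma kClusterGraph_reachable_of_sublevel [Finite V] (ht : t ≠ ⊤) (hts : t ≤ s)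
    (hxt : tauV G W k x ≤ t) (hr : (sublevel G W t).Reachable x y) (hx : tauV G W k x ≤ s)
    (hy : tauV G W k y ≤ s) : (kClusterGraph G W k s).Reachable ⟨x, hx⟩ ⟨y, hy⟩ := by
  refine (hr.mem_of_adj_closed (S := {z | ∃ hz : tauV G W k z ≤ t,
    (kClusterGraph G W k s).Reachable ⟨x, hx⟩ ⟨z, hz.trans hts⟩}) ?_ ⟨hxt, .rfl⟩).2
  rintro z w ⟨hz, hxz⟩ hzw
  have hw := tauV_le_of_reachable ht hz hzw.reachable
  have hadj : (kClusterGraph G W k s).Adj ⟨z, hz.trans hts⟩ ⟨w, hw.trans hts⟩ :=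
    ⟨hzw.1, by simpa using ⟨⟨hz.trans hts, hw.trans hts⟩, hzw.2.trans hts⟩⟩
  exact ⟨hw, hxz.trans hadj.reachable⟩

lemma persistentBetti_eq_ncard_image (r : ℝ≥0∞) :
    persistentBetti G W k r s =
      ((kClusterGraph G W k s).connectedComponentMk '' {z | tauV G W k z.1 ≤ r}).ncard := by
  unfold persistentBetti
  congr 1
  ext c
  exact exists_congr fun _ => and_comm

end Filtration

section AddEdge

variable [DecidableEq V] {G : SimpleGraph V} {W : Sym2 V → NNReal} {u v : V} {w₀ : NNReal}
  {k : ℕ} {t s : ℝ≥0∞}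

local notation "G⁺" => G ⊔ SimpleGraph.fromEdgeSet {s(u, v)}
local notation "W⁺" => Function.update W s(u, v) w₀

lemma update_apply_of_adj (hnotE : ¬ G.Adj u v) {a b : V} (hab : G.Adj a b) :
    W⁺ s(a, b) = W s(a, b) := by
  refine Function.update_of_ne (fun he => ?_) _ _
  rcases Sym2.eq_iff.mp he with ⟨rfl, rfl⟩ | ⟨rfl, rfl⟩
  exacts [hnotE hab, hnotE hab.symm]

lemma sublevel_le_sublevel_sup_edge (hnotE : ¬ G.Adj u v) :
    sublevel G W t ≤ sublevel G⁺ W⁺ t :=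
  fun _ _ hab => ⟨Or.inl hab.1, by rw [update_apply_of_adj hnotE hab.1]; exact hab.2⟩

lemma sublevel_sup_edge_le (hnotE : ¬ G.Adj u v) :
    sublevel G⁺ W⁺ t ≤ sublevel G W t ⊔ edge u v := by
  rintro a b ⟨hG | hE, hW⟩
  · exact Or.inl ⟨hG, by rwa [update_apply_of_adj hnotE hG] at hW⟩
  · exact Or.inr hE

lemma tauV_sup_edge_le [Finite V] (hnotE : ¬ G.Adj u v) (x : V) :
    tauV G⁺ W⁺ k x ≤ tauV G W k x :=
  sInf_le_sInf fun _ ht => ht.trans (clusterSize_le_of_le (sublevel_le_sublevel_sup_edge hnotE) x)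

lemma sublevel_sup_edge_reachable_of_tauV_lt [Finite V] (hnotE : ¬ G.Adj u v) (ht : t ≠ ⊤)
    {x : V} (hx' : tauV G⁺ W⁺ k x ≤ t) (hx : ¬ tauV G W k x ≤ t) :
    (sublevel G⁺ W⁺ t).Reachable x u := by
  by_contra hxu
  refine hx (tauV_le_of_le_clusterSize ((le_clusterSize_of_tauV_le ht hx').trans
    (Set.ncard_le_ncard fun y hy => ?_)))
  exact (hy.of_le_sup_edge (sublevel_sup_edge_le hnotE)).resolve_right fun h => hxu h.1

def kClusterGraphSupEdgeHom [Finite V] (hnotE : ¬ G.Adj u v) (W : Sym2 V → NNReal) (w₀ : NNReal)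
    (k : ℕ) (s : ℝ≥0∞) :
    kClusterGraph G W k s →g kClusterGraph G⁺ (Function.update W s(u, v) w₀) k s where
  toFun x := ⟨x.1, (tauV_sup_edge_le hnotE x.1).trans x.2⟩
  map_rel' {x y} h := by
    obtain ⟨hG, hτ⟩ := h
    refine ⟨Or.inl hG, ?_⟩
    simp only [tauEdge_mk, update_apply_of_adj hnotE hG, max_le_iff] at hτ ⊢
    exact ⟨⟨(tauV_sup_edge_le hnotE _).trans hτ.1.1, (tauV_sup_edge_le hnotE _).trans hτ.1.2⟩,
      hτ.2⟩

@[simp]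
lemma kClusterGraphSupEdgeHom_val [Finite V] (hnotE : ¬ G.Adj u v) (W : Sym2 V → NNReal)
    (w₀ : NNReal) (k : ℕ) (s : ℝ≥0∞) (x : {z // tauV G W k z ≤ s}) :
    (kClusterGraphSupEdgeHom hnotE W w₀ k s x).1 = x.1 :=
  rfl

lemma kClusterGraphSupEdgeHom_injective [Finite V] (hnotE : ¬ G.Adj u v) (W : Sym2 V → NNReal)
    (w₀ : NNReal) (k : ℕ) (s : ℝ≥0∞) :
    Function.Injective (kClusterGraphSupEdgeHom hnotE W w₀ k s) :=
  fun x y h => Subtype.ext (by simpa using congrArg Subtype.val h)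

lemma exists_adj_of_adj_kClusterGraphSupEdgeHom [Finite V] (hnotE : ¬ G.Adj u v) (hs : s ≠ ⊤)
    {x : {z // tauV G W k z ≤ s}} {y : {z // tauV G⁺ W⁺ k z ≤ s}}
    (hxy : (kClusterGraph G⁺ W⁺ k s).Adj (kClusterGraphSupEdgeHom hnotE W w₀ k s x) y)
    (hne : s(x.1, y.1) ≠ s(u, v)) :
    ∃ y₀, kClusterGraphSupEdgeHom hnotE W w₀ k s y₀ = y ∧ (kClusterGraph G W k s).Adj x y₀ := by
  obtain ⟨hG | hE, hτ⟩ := hxy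
  swap
  · exact (hne ((fromEdgeSet_adj _).mp hE).1).elim
  simp only [kClusterGraphSupEdgeHom_val] at hG
  simp only [kClusterGraphSupEdgeHom_val, tauEdge_mk, max_le_iff,
    update_apply_of_adj hnotE hG] at hτ
  have hy := tauV_le_of_reachable hs x.2 (Adj.reachable (G := sublevel G W s) ⟨hG, hτ.2⟩)
  exact ⟨⟨y.1, hy⟩, Subtype.ext rfl, hG, by simpa using ⟨⟨x.2, hy⟩, hτ.2⟩⟩

lemma kClusterGraph_reachable_or_of_sup_edge_reachable [Finite V] (hnotE : ¬ G.Adj u v)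
    (hs : s ≠ ⊤) {a b : {z // tauV G W k z ≤ s}}
    (h : (kClusterGraph G⁺ W⁺ k s).Reachable (kClusterGraphSupEdgeHom hnotE W w₀ k s a)
      (kClusterGraphSupEdgeHom hnotE W w₀ k s b)) :
    (kClusterGraph G W k s).Reachable a b ∨
      ∃ z, (kClusterGraph G W k s).Reachable a z ∧ (z.1 = u ∨ z.1 = v) := by
  by_contra! hne
  set φ := kClusterGraphSupEdgeHom hnotE W w₀ k s
  have hclosed : ∀ ⦃x' y⦄, x' ∈ {y | ∃ z, φ z = y ∧ (kClusterGraph G W k s).Reachable a z} →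
      (kClusterGraph G⁺ W⁺ k s).Adj x' y →
      y ∈ {y | ∃ z, φ z = y ∧ (kClusterGraph G W k s).Reachable a z} := by
    rintro _ y ⟨x, rfl, hax⟩ hxy
    have hxuv := hne.2 x hax
    obtain ⟨y₀, rfl, hadj⟩ := exists_adj_of_adj_kClusterGraphSupEdgeHom hnotE hs hxy
      (fun he => by rcases Sym2.eq_iff.mp he with ⟨h', -⟩ | ⟨h', -⟩; exacts [hxuv.1 h', hxuv.2 h'])
    exact ⟨y₀, rfl, hax.trans hadj.reachable⟩
  obtain ⟨z, hzb, haz⟩ := h.mem_of_adj_closed hclosed ⟨a, rfl, .rfl⟩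
  exact hne.1 (kClusterGraphSupEdgeHom_injective hnotE W w₀ k s hzb ▸ haz)

lemma injOn_map_kClusterGraphSupEdgeHom [Finite V] (hnotE : ¬ G.Adj u v) (hs : s ≠ ⊤) :
    Set.InjOn (ConnectedComponent.map (kClusterGraphSupEdgeHom hnotE W w₀ k s))
      ((kClusterGraph G W k s).connectedComponentMk '' {z | z.1 = u})ᶜ := by
  intro c₁ hc₁ c₂ hc₂ he
  induction c₁ using ConnectedComponent.ind with | h a => ?_
  induction c₂ using ConnectedComponent.ind with | h b => ?_
  rw [ConnectedComponent.map_mk, ConnectedComponent.map_mk] at he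
  have hab := ConnectedComponent.exact he
  have hv : ∀ {a z}, (kClusterGraph G W k s).connectedComponentMk a ∉
      (kClusterGraph G W k s).connectedComponentMk '' {z | z.1 = u} →
      (kClusterGraph G W k s).Reachable a z → z.1 = u ∨ z.1 = v → z.1 = v :=
    fun hc haz hz => hz.resolve_left fun hzu => hc ⟨_, hzu, (ConnectedComponent.sound haz).symm⟩
  refine ConnectedComponent.sound ?_
  rcases kClusterGraph_reachable_or_of_sup_edge_reachable hnotE hs hab with h | ⟨z, haz, hz⟩
  · exact h
  rcases kClusterGraph_reachable_or_of_sup_edge_reachable hnotE hs hab.symm with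
    h | ⟨z', hbz', hz'⟩
  · exact h.symm
  obtain rfl : z = z' := Subtype.ext ((hv hc₁ haz hz).trans (hv hc₂ hbz' hz').symm)
  exact haz.trans hbz'.symm

lemma persistentBetti_sup_edge_le [Finite V] (hnotE : ¬ G.Adj u v) (r : ℝ≥0∞) (hs : s ≠ ⊤) :
    persistentBetti G⁺ W⁺ k r s ≤ persistentBetti G W k r s + 1 := by
  rw [persistentBetti_eq_ncard_image, persistentBetti_eq_ncard_image]
  set φ := kClusterGraphSupEdgeHom hnotE W w₀ k s
  set S := (kClusterGraph G W k s).connectedComponentMk '' {z | tauV G W k z.1 ≤ r}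
  set S' := (kClusterGraph G⁺ W⁺ k s).connectedComponentMk '' {z | tauV G⁺ W⁺ k z.1 ≤ r}
  have hS' : S' ⊆ ConnectedComponent.map φ '' S ∪
      (kClusterGraph G⁺ W⁺ k s).connectedComponentMk '' {z | z.1 = u} := by
    rintro _ ⟨y, hyr, rfl⟩
    by_cases hy : tauV G W k y.1 ≤ min r s
    · exact Or.inl ⟨_, ⟨⟨y.1, hy.trans (min_le_right _ _)⟩, hy.trans (min_le_left _ _), rfl⟩,
        ConnectedComponent.map_mk φ _⟩
    have ht : min r s ≠ ⊤ := ((min_le_right _ _).trans_lt hs.lt_top).ne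
    have hyt : tauV G⁺ W⁺ k y.1 ≤ min r s := le_min hyr y.2
    have hyu := sublevel_sup_edge_reachable_of_tauV_lt hnotE ht hyt hy
    have hu := (tauV_le_of_reachable ht hyt hyu).trans (min_le_right _ _)
    exact Or.inr ⟨⟨u, hu⟩, rfl, (ConnectedComponent.sound
      (kClusterGraph_reachable_of_sublevel ht (min_le_right _ _) hyt hyu y.2 hu)).symm⟩
  calc S'.ncard ≤ (ConnectedComponent.map φ '' S).ncard + 1 :=
        Set.ncard_le_ncard_add_one_of_subset_union
          (subsingleton_image_connectedComponentMk _ u) hS'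
    _ ≤ S.ncard + 1 := Nat.add_le_add_right (Set.ncard_image_le (Set.toFinite S)) 1

lemma persistentBetti_le_sup_edge [Finite V] (hnotE : ¬ G.Adj u v) (r : ℝ≥0∞) (hs : s ≠ ⊤) :
    persistentBetti G W k r s ≤ persistentBetti G⁺ W⁺ k r s + 1 := by
  rw [persistentBetti_eq_ncard_image, persistentBetti_eq_ncard_image]
  set φ := kClusterGraphSupEdgeHom hnotE W w₀ k s
  set S := (kClusterGraph G W k s).connectedComponentMk '' {z | tauV G W k z.1 ≤ r}
  set U := (kClusterGraph G W k s).connectedComponentMk '' {z | z.1 = u}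
  have hφS : ConnectedComponent.map φ '' (S \ U) ⊆
      (kClusterGraph G⁺ W⁺ k s).connectedComponentMk '' {z | tauV G⁺ W⁺ k z.1 ≤ r} := by
    rintro _ ⟨_, ⟨⟨z, hzr, rfl⟩, -⟩, rfl⟩
    exact ⟨φ z, (tauV_sup_edge_le hnotE _).trans hzr, (ConnectedComponent.map_mk φ z).symm⟩
  calc S.ncard ≤ (S \ U).ncard + 1 :=
        Set.ncard_le_ncard_add_one_of_subset_union
          (subsingleton_image_connectedComponentMk _ u) (Set.subset_sdiff_union S U)
    _ = (ConnectedComponent.map φ '' (S \ U)).ncard + 1 := by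
        rw [((injOn_map_kClusterGraphSupEdgeHom hnotE hs).mono
          (Set.sdiff_subset_compl S U)).ncard_image]
    _ ≤ _ := Nat.add_le_add_right (Set.ncard_le_ncard hφS) 1

end AddEdge

theorem persistentBetti_add_edge_general [Fintype V] [DecidableEq V]
    (G : SimpleGraph V) (W : Sym2 V → NNReal) (k : ℕ)
    (r s : NNReal)
    (u v : V) (hnotE : ¬ G.Adj u v) (w₀ : NNReal) :
    |(persistentBetti (G ⊔ SimpleGraph.fromEdgeSet {s(u, v)})
        (Function.update W s(u, v) w₀) k (r : ℝ≥0∞) (s : ℝ≥0∞) : ℤ) -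
      (persistentBetti G W k (r : ℝ≥0∞) (s : ℝ≥0∞) : ℤ)| ≤ 1 := by
  have h₁ := persistentBetti_sup_edge_le (W := W) (w₀ := w₀) (k := k) (s := s) hnotE r coe_ne_top
  have h₂ := persistentBetti_le_sup_edge (W := W) (w₀ := w₀) (k := k) (s := s) hnotE r coe_ne_top
  rw [abs_sub_le_iff]
  omega

/-- For `k ≥ 1` and `0 ≤ r ≤ s`: adding a single weighted edge
`e₀ = (u,v) ∉ E` of weight `w₀` to `G` changes the 0-th persistent Betti number of
the `k`-cluster filtration by at most one. -/
theorem persistentBetti_add_edge [Fintype V] [DecidableEq V]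
    (G : SimpleGraph V) (W : Sym2 V → NNReal) (k : ℕ) (hk : 1 ≤ k)
    (r s : NNReal) (hrs : r ≤ s)
    (u v : V) (huv : u ≠ v) (hnotE : ¬ G.Adj u v) (w₀ : NNReal) :
    |(persistentBetti (G ⊔ SimpleGraph.fromEdgeSet {s(u, v)})
        (Function.update W s(u, v) w₀) k (r : ℝ≥0∞) (s : ℝ≥0∞) : ℤ) -
      (persistentBetti G W k (r : ℝ≥0∞) (s : ℝ≥0∞) : ℤ)| ≤ 1 :=
  persistentBetti_add_edge_general G W k r s u v hnotE w₀
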